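/- arXiv:1710.02072 — 2 statements merged into one kernel-verified Lean document; each statement's English description precedes it below -/
import Mathlib

section
/- Let A be a block matrix [[B, C], [0, D]] with nonnegative blocks. If rank_+(B|C) = rank_+(B), where (B|C) denotes the horizontal concatenation of B and C, then rank_+(A) = rank_+(B) + rank_+(D). -/
noncomputable def nnRank {α β : Type} [Fintype α] [Fintype β] (A : Matrix α β ℝ) : ℕ :=
  sInf {r : ℕ | ∃ u : Fin r → α → ℝ, ∃ v : Fin r → β → ℝ,
    (∀ t i, 0 ≤ u t i) ∧ (∀ t j, 0 ≤ v t j) ∧ ∀ i j, A i j = ∑ t, u t i * v t j}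

/-!
Splitting a minimal nonnegative factorization of `[[B, C], [0, D]]` according to whether a rank-one
term meets the lower rows shows `rank₊ B + rank₊ D ≤ rank₊ A`: a term that meets the lower rows
must vanish on the left columns, since the lower-left block is zero and nothing cancels in a sum
of nonnegative terms. Conversely, a factorization of `(B | C)` stacked on one of `D` factors `A`,
so `rank₊ A ≤ rank₊ (B | C) + rank₊ D`, which equals `rank₊ B + rank₊ D` by hypothesis.
-/

open Matrix

section NNRank

variable {α β : Type} [Fintype α] [Fintype β]

lemma nnRank_le_card {ι : Type} [Fintype ι] (A : Matrix α β ℝ) (u : ι → α → ℝ) (v : ι → β → ℝ)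
    (hu : ∀ t i, 0 ≤ u t i) (hv : ∀ t j, 0 ≤ v t j) (hA : ∀ i j, A i j = ∑ t, u t i * v t j) :
    nnRank A ≤ Fintype.card ι := by
  let e := (Fintype.equivFin ι).symm
  refine Nat.sInf_le ⟨fun t => u (e t), fun t => v (e t), fun t => hu _, fun t => hv _,
    fun i j => ?_⟩
  rw [hA, ← e.sum_comp]

lemma exists_nnFactorization_nnRank (A : Matrix α β ℝ) (hA : ∀ i j, 0 ≤ A i j) :
    ∃ u : Fin (nnRank A) → α → ℝ, ∃ v : Fin (nnRank A) → β → ℝ,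
      (∀ t i, 0 ≤ u t i) ∧ (∀ t j, 0 ≤ v t j) ∧ ∀ i j, A i j = ∑ t, u t i * v t j := by
  classical
  have hcard : Fintype.card α ∈ {r : ℕ | ∃ u : Fin r → α → ℝ, ∃ v : Fin r → β → ℝ,
      (∀ t i, 0 ≤ u t i) ∧ (∀ t j, 0 ≤ v t j) ∧ ∀ i j, A i j = ∑ t, u t i * v t j} := by
    refine ⟨fun t i => if Fintype.equivFin α i = t then 1 else 0,
      fun t j => A ((Fintype.equivFin α).symm t) j, fun t i => by positivity,
      fun t j => hA _ _, fun i j => by simp [ite_mul]⟩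
  exact Nat.sInf_mem ⟨_, hcard⟩

end NNRank

section BlockTriangular

variable {m₁ m₂ n₁ n₂ : Type} [Fintype m₁] [Fintype m₂] [Fintype n₁] [Fintype n₂]

lemma nnRank_fromBlocks_zero₂₁_le (B : Matrix m₁ n₁ ℝ) (C : Matrix m₁ n₂ ℝ)
    (D : Matrix m₂ n₂ ℝ) (hB : ∀ i j, 0 ≤ B i j) (hC : ∀ i j, 0 ≤ C i j)
    (hD : ∀ i j, 0 ≤ D i j) :
    nnRank (fromBlocks B C 0 D) ≤ nnRank (fromCols B C) + nnRank D := by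
  have hBC : ∀ i j, 0 ≤ fromCols B C i j := fun i j => by
    cases j <;> simp [hB, hC]
  obtain ⟨u₁, v₁, hu₁, hv₁, h₁⟩ := exists_nnFactorization_nnRank _ hBC
  obtain ⟨u₂, v₂, hu₂, hv₂, h₂⟩ := exists_nnFactorization_nnRank _ hD
  have hcard := nnRank_le_card (fromBlocks B C 0 D)
    (Sum.elim (fun t => Sum.elim (u₁ t) 0) (fun t => Sum.elim 0 (u₂ t)))
    (Sum.elim v₁ (fun t => Sum.elim 0 (v₂ t)))
    (by rintro (t | t) (i | i) <;> simp [hu₁, hu₂])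
    (by rintro (t | t) (j | j) <;> simp [hv₁, hv₂])
    (by
      rintro (i | i) (j | j)
      · simpa [Fintype.sum_sum_type] using h₁ i (Sum.inl j)
      · simpa [Fintype.sum_sum_type] using h₁ i (Sum.inr j)
      · simp [Fintype.sum_sum_type]
      · simpa [Fintype.sum_sum_type] using h₂ i j)
  simpa using hcard

lemma add_nnRank_le_nnRank_fromBlocks_zero₂₁ (B : Matrix m₁ n₁ ℝ) (C : Matrix m₁ n₂ ℝ)
    (D : Matrix m₂ n₂ ℝ) (hB : ∀ i j, 0 ≤ B i j) (hC : ∀ i j, 0 ≤ C i j)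
    (hD : ∀ i j, 0 ≤ D i j) :
    nnRank B + nnRank D ≤ nnRank (fromBlocks B C 0 D) := by
  classical
  have hA : ∀ i j, 0 ≤ fromBlocks B C 0 D i j := by
    rintro (i | i) (j | j) <;> simp [hB, hC, hD]
  obtain ⟨u, v, hu, hv, huv⟩ := exists_nnFactorization_nnRank _ hA
  let upper : Fin (nnRank (fromBlocks B C 0 D)) → Prop := fun t => ∀ i, u t (Sum.inr i) = 0
  have hleft : ∀ t, ¬upper t → ∀ j, v t (Sum.inl j) = 0 := by
    intro t ht j
    obtain ⟨i, hi⟩ := not_forall.mp ht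
    have hzero : ∑ t, u t (Sum.inr i) * v t (Sum.inl j) = 0 := by
      simpa using (huv (Sum.inr i) (Sum.inl j)).symm
    have hterms := (Fintype.sum_eq_zero_iff_of_nonneg fun t => mul_nonneg (hu t _) (hv t _)).mp
      hzero
    exact (mul_eq_zero.mp (congrFun hterms t)).resolve_left hi
  have hBle := nnRank_le_card B (fun t : Subtype upper => fun i => u t (Sum.inl i))
    (fun t j => v t (Sum.inl j)) (fun _ _ => hu _ _) (fun _ _ => hv _ _) fun i j => by
      have hsplit := Fintype.sum_subtype_add_sum_subtype upper
        (fun t => u t (Sum.inl i) * v t (Sum.inl j))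
      rw [Fintype.sum_eq_zero (fun t : {t // ¬upper t} => u t (Sum.inl i) * v t (Sum.inl j))
        fun t => by rw [hleft t t.2, mul_zero], add_zero] at hsplit
      simpa [hsplit] using huv (Sum.inl i) (Sum.inl j)
  have hDle := nnRank_le_card D (fun t : {t // ¬upper t} => fun i => u t (Sum.inr i))
    (fun t j => v t (Sum.inr j)) (fun _ _ => hu _ _) (fun _ _ => hv _ _) fun i j => by
      have hsplit := Fintype.sum_subtype_add_sum_subtype upper
        (fun t => u t (Sum.inr i) * v t (Sum.inr j))
      rw [Fintype.sum_eq_zero (fun t : Subtype upper => u t (Sum.inr i) * v t (Sum.inr j))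
        fun t => by rw [t.2 i, zero_mul], zero_add] at hsplit
      simpa [hsplit] using huv (Sum.inr i) (Sum.inr j)
  calc nnRank B + nnRank D ≤ Fintype.card (Subtype upper) + Fintype.card {t // ¬upper t} :=
        add_le_add hBle hDle
    _ = nnRank (fromBlocks B C 0 D) := by
        rw [← Fintype.card_sum, Fintype.card_congr (Equiv.sumCompl upper), Fintype.card_fin]

end BlockTriangular

theorem stmt_1 {m1 m2 n1 n2 : ℕ}
    (B : Matrix (Fin m1) (Fin n1) ℝ) (C : Matrix (Fin m1) (Fin n2) ℝ)
    (D : Matrix (Fin m2) (Fin n2) ℝ)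
    (hB : ∀ i j, 0 ≤ B i j) (hC : ∀ i j, 0 ≤ C i j) (hD : ∀ i j, 0 ≤ D i j)
    (h : nnRank (Matrix.fromCols B C) = nnRank B) :
    nnRank (Matrix.fromBlocks B C 0 D) = nnRank B + nnRank D :=
  le_antisymm (h ▸ nnRank_fromBlocks_zero₂₁_le B C D hB hC hD)
    (add_nnRank_le_nnRank_fromBlocks_zero₂₁ B C D hB hC hD)
end

section
/- Let A be a tridiagonal n x n nonnegative matrix whose subdiagonal and superdiagonal entries are all nonzero, with A_{11} = 0 and n \geq 2. Then rank_+(A) = 2 + rank_+(A'), where A' is the matrix obtained from A by deleting the first two rows and the first two columns. -/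
open Matrix Function

-- `nnRank A` is by definition `sInf {r | HasNonnegFactorization A (Fin r)}`.
def HasNonnegFactorization {α β : Type} (A : Matrix α β ℝ) (γ : Type) [Fintype γ] : Prop :=
  ∃ u : γ → α → ℝ, ∃ v : γ → β → ℝ,
    (∀ t i, 0 ≤ u t i) ∧ (∀ t j, 0 ≤ v t j) ∧ ∀ i j, A i j = ∑ t, u t i * v t j

theorem HasNonnegFactorization.of_equiv {α β γ δ : Type} [Fintype γ] [Fintype δ]
    {A : Matrix α β ℝ} (h : HasNonnegFactorization A γ) (e : γ ≃ δ) :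
    HasNonnegFactorization A δ := by
  obtain ⟨u, v, hu, hv, hA⟩ := h
  refine ⟨fun t => u (e.symm t), fun t => v (e.symm t), fun t => hu _, fun t => hv _,
    fun i j => ?_⟩
  rw [hA, ← e.symm.sum_comp]

theorem hasNonnegFactorization_rows {α β : Type} [Fintype α] {A : Matrix α β ℝ}
    (hA : ∀ i j, 0 ≤ A i j) : HasNonnegFactorization A α := by
  classical
  exact ⟨fun a i => if i = a then 1 else 0, fun a j => A a j, fun a i => by positivity,
    fun a j => hA a j, fun i j => by simp⟩

section NonnegRank

variable {α β : Type} [Fintype α] [Fintype β]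

theorem nnRank_le_card_s14 {A : Matrix α β ℝ} {γ : Type} [Fintype γ]
    (h : HasNonnegFactorization A γ) : nnRank A ≤ Fintype.card γ :=
  Nat.sInf_le (h.of_equiv (Fintype.equivFin γ))

theorem hasNonnegFactorization_nnRank {A : Matrix α β ℝ} (hA : ∀ i j, 0 ≤ A i j) :
    HasNonnegFactorization A (Fin (nnRank A)) :=
  Nat.sInf_mem (s := {r | HasNonnegFactorization A (Fin r)})
    ⟨_, (hasNonnegFactorization_rows hA).of_equiv (Fintype.equivFin α)⟩

theorem nnRank_le_card_finset {A : Matrix α β ℝ} {γ : Type} (s : Finset γ)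
    (u : γ → α → ℝ) (v : γ → β → ℝ) (hu : ∀ t i, 0 ≤ u t i) (hv : ∀ t j, 0 ≤ v t j)
    (hA : ∀ i j, A i j = ∑ t ∈ s, u t i * v t j) : nnRank A ≤ s.card := by
  simpa using nnRank_le_card_s14 (γ := s) ⟨fun t => u t, fun t => v t, fun t => hu t, fun t => hv t,
    fun i j => by rw [hA, ← Finset.sum_coe_sort]⟩

theorem nnRank_add_le {A B : Matrix α β ℝ} (hA : ∀ i j, 0 ≤ A i j) (hB : ∀ i j, 0 ≤ B i j) :
    nnRank (A + B) ≤ nnRank A + nnRank B := by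
  obtain ⟨u, v, hu, hv, hAuv⟩ := hasNonnegFactorization_nnRank hA
  obtain ⟨u', v', hu', hv', hBuv⟩ := hasNonnegFactorization_nnRank hB
  simpa using nnRank_le_card_s14 (A := A + B) ⟨Sum.elim u u', Sum.elim v v',
    by simp [Sum.forall, hu, hu'], by simp [Sum.forall, hv, hv'],
    fun i j => by simp [Fintype.sum_sum_type, hAuv, hBuv]⟩

theorem nnRank_vecMulVec_le_one {x : α → ℝ} {y : β → ℝ} (hx : ∀ i, 0 ≤ x i) (hy : ∀ j, 0 ≤ y j) :
    nnRank (vecMulVec x y) ≤ 1 := by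
  simpa using nnRank_le_card_s14 (γ := Unit) ⟨fun _ => x, fun _ => y, fun _ => hx, fun _ => hy,
    fun i j => by simp [vecMulVec_apply]⟩

theorem nnRank_le_nnRank_submatrix {α' β' : Type} [Fintype α'] [Fintype β'] {B : Matrix α β ℝ}
    {e : α' → α} {f : β' → β} (he : Injective e) (hf : Injective f) (hB : ∀ i j, 0 ≤ B i j)
    (hrow : ∀ i ∉ Set.range e, ∀ j, B i j = 0) (hcol : ∀ j ∉ Set.range f, ∀ i, B i j = 0) :
    nnRank B ≤ nnRank (B.submatrix e f) := by
  obtain ⟨u, v, hu, hv, huv⟩ :=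
    hasNonnegFactorization_nnRank (A := B.submatrix e f) fun _ _ => hB _ _
  refine (nnRank_le_card_s14 ⟨fun t => extend e (u t) 0, fun t => extend f (v t) 0,
    fun t => extend_nonneg (e := (0 : α → ℝ)) (hu t) le_rfl,
    fun t => extend_nonneg (e := (0 : β → ℝ)) (hv t) le_rfl, fun i j => ?_⟩).trans_eq
    (Fintype.card_fin _)
  by_cases hi : i ∈ Set.range e
  · by_cases hj : j ∈ Set.range f
    · obtain ⟨⟨a, rfl⟩, ⟨b, rfl⟩⟩ := And.intro hi hj
      simpa [he.extend_apply, hf.extend_apply] using huv a b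
    · simp [hcol j hj, extend_apply' _ _ _ hj]
  · simp [hrow i hi, extend_apply' _ _ _ hi]

theorem nnRank_le_nnRank_updateRow_updateCol_add_two [DecidableEq α] [DecidableEq β]
    {A : Matrix α β ℝ} (hA : ∀ i j, 0 ≤ A i j) (i₀ : α) (j₀ : β) :
    nnRank A ≤ nnRank ((A.updateRow i₀ 0).updateCol j₀ 0) + 2 := by
  set B := (A.updateRow i₀ 0).updateCol j₀ 0
  set X := vecMulVec (fun i => if i = i₀ then 0 else A i j₀) (Pi.single j₀ 1)
  set Y := vecMulVec (Pi.single i₀ 1) (A i₀)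
  have hBnn : ∀ i j, 0 ≤ B i j := by
    intro i j; simp only [B, updateCol_apply, updateRow_apply]; split_ifs <;> simp [hA]
  have hXnn : ∀ i j, 0 ≤ X i j := by
    intro i j; simp only [X, vecMulVec_apply, Pi.single_apply]; split_ifs <;> simp [hA]
  have hYnn : ∀ i j, 0 ≤ Y i j := by
    intro i j; simp only [Y, vecMulVec_apply, Pi.single_apply]; split_ifs <;> simp [hA]
  have hsplit : A = B + (X + Y) := by
    ext i j
    simp only [B, X, Y, Matrix.add_apply, updateCol_apply, updateRow_apply, vecMulVec_apply,
      Pi.single_apply]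
    split_ifs <;> simp_all
  calc nnRank A ≤ nnRank B + nnRank (X + Y) := hsplit ▸ nnRank_add_le hBnn fun i j =>
        add_nonneg (hXnn i j) (hYnn i j)
    _ ≤ nnRank B + (nnRank X + nnRank Y) := by gcongr; exact nnRank_add_le hXnn hYnn
    _ ≤ nnRank B + 2 := by
      have hX : nnRank X ≤ 1 := nnRank_vecMulVec_le_one
        (fun i => by split_ifs <;> simp [hA])
        (fun j => by simp only [Pi.single_apply]; split_ifs <;> simp)
      have hY : nnRank Y ≤ 1 := nnRank_vecMulVec_le_one
        (fun i => by simp only [Pi.single_apply]; split_ifs <;> simp) (hA i₀)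
      omega

theorem nnRank_le_nnRank_submatrix_add_two [DecidableEq α] [DecidableEq β] {α' β' : Type}
    [Fintype α'] [Fintype β'] {A : Matrix α β ℝ} (hA : ∀ i j, 0 ≤ A i j) {e : α' → α}
    {f : β' → β} (he : Injective e) (hf : Injective f) {i₁ : α} {j₁ : β}
    (hi₁ : i₁ ∉ Set.range e) (hj₁ : j₁ ∉ Set.range f)
    (hzero : ∀ i j, i ≠ i₁ → j ≠ j₁ → i ∉ Set.range e ∨ j ∉ Set.range f → A i j = 0) :
    nnRank A ≤ nnRank (A.submatrix e f) + 2 := by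
  set B := (A.updateRow i₁ 0).updateCol j₁ 0
  have hB : ∀ i j, B i j = if i = i₁ ∨ j = j₁ then 0 else A i j := by
    intro i j; simp only [B, updateCol_apply, updateRow_apply]; split_ifs <;> simp_all
  have hBsub : B.submatrix e f = A.submatrix e f := by
    ext a b
    have : e a ≠ i₁ := fun h => hi₁ ⟨a, h⟩
    have : f b ≠ j₁ := fun h => hj₁ ⟨b, h⟩
    simp_all
  have hBzero (i j) (h : i ∉ Set.range e ∨ j ∉ Set.range f) : B i j = 0 := by
    rw [hB]; split_ifs with hij
    exacts [rfl, hzero i j (by tauto) (by tauto) h]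
  have hBnn : ∀ i j, 0 ≤ B i j := by
    intro i j; rw [hB]; split_ifs
    exacts [le_rfl, hA i j]
  calc nnRank A ≤ nnRank B + 2 := nnRank_le_nnRank_updateRow_updateCol_add_two hA i₁ j₁
    _ ≤ nnRank (B.submatrix e f) + 2 := by
      gcongr
      exact nnRank_le_nnRank_submatrix he hf hBnn (fun i hi j => hBzero i j (.inl hi))
        fun j hj i => hBzero i j (.inr hj)
    _ = nnRank (A.submatrix e f) + 2 := by rw [hBsub]

theorem nnRank_submatrix_add_two_le {α' β' : Type} [Fintype α'] [Fintype β'] {A : Matrix α β ℝ}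
    (hA : ∀ i j, 0 ≤ A i j) (e : α' → α) (f : β' → β) {i₀ i₁ : α} {j₀ j₁ : β}
    (h00 : A i₀ j₀ = 0) (h01 : 0 < A i₀ j₁) (h10 : 0 < A i₁ j₀)
    (hrow : ∀ b, A i₀ (f b) = 0) (hcol : ∀ a, A (e a) j₀ = 0) :
    nnRank (A.submatrix e f) + 2 ≤ nnRank A := by
  classical
  obtain ⟨u, v, hu, hv, huv⟩ := hasNonnegFactorization_nnRank hA
  have term_eq_zero {i j} (hij : A i j = 0) (t) : u t i * v t j = 0 :=
    (Finset.sum_eq_zero_iff_of_nonneg fun t _ => mul_nonneg (hu t i) (hv t j)).mp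
      ((huv i j).symm.trans hij) t (Finset.mem_univ t)
  have exists_term_ne_zero {i j} (hij : 0 < A i j) : ∃ t, u t i ≠ 0 ∧ v t j ≠ 0 := by
    obtain ⟨t, -, ht⟩ := Finset.exists_ne_zero_of_sum_ne_zero (huv i j ▸ hij.ne')
    exact ⟨t, left_ne_zero_of_mul ht, right_ne_zero_of_mul ht⟩
  obtain ⟨t₁, ht₁, -⟩ := exists_term_ne_zero h01
  obtain ⟨t₂, -, ht₂⟩ := exists_term_ne_zero h10
  have ht₁₂ : t₁ ≠ t₂ := by
    rintro rfl
    exact ht₂ ((mul_eq_zero.mp (term_eq_zero h00 t₁)).resolve_left ht₁)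
  -- A term with `u t i₀ ≠ 0` or `v t j₀ ≠ 0` vanishes on the submatrix, since `A i₀ (f b) = 0`
  -- and `A (e a) j₀ = 0`; so the terms in `T` alone factor it.
  set T := Finset.univ.filter fun t => u t i₀ = 0 ∧ v t j₀ = 0
  have hsub : nnRank (A.submatrix e f) ≤ T.card := by
    refine nnRank_le_card_finset T (fun t a => u t (e a)) (fun t b => v t (f b))
      (fun _ _ => hu _ _) (fun _ _ => hv _ _) fun a b => ?_
    refine (huv (e a) (f b)).trans (Finset.sum_filter_of_ne fun t _ ht => ⟨?_, ?_⟩).symm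
    · by_contra h
      exact right_ne_zero_of_mul ht ((mul_eq_zero.mp (term_eq_zero (hrow b) t)).resolve_left h)
    · by_contra h
      exact left_ne_zero_of_mul ht ((mul_eq_zero.mp (term_eq_zero (hcol a) t)).resolve_right h)
  have hT : T ⊆ {t₁, t₂}ᶜ := by
    intro t ht
    simp only [T, Finset.mem_filter] at ht
    simp only [Finset.mem_compl, Finset.mem_insert, Finset.mem_singleton]
    rintro (rfl | rfl)
    exacts [ht₁ ht.2.1, ht₂ ht.2.2]
  have hcard := Finset.card_le_card hT
  rw [Finset.card_compl, Finset.card_pair ht₁₂, Fintype.card_fin] at hcard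
  have : 2 ≤ nnRank A := by
    simpa [Finset.card_pair ht₁₂] using Finset.card_le_univ {t₁, t₂}
  omega

end NonnegRank

theorem Fin.one_lt_abs_val_sub_zero {n : ℕ} {j : Fin (n + 2)} (h₀ : j ≠ 0) (h₁ : j ≠ 1) :
    1 < |(j : ℤ) - ((0 : Fin (n + 2)) : ℤ)| := by
  have := Fin.val_ne_of_ne h₀
  have := Fin.val_ne_of_ne h₁
  simp only [Fin.val_zero, Fin.val_one, Nat.cast_zero, sub_zero, Nat.abs_cast] at *
  omega

theorem Fin.eq_zero_or_eq_one_of_notMem_range_succ_succ {n : ℕ} {i : Fin (n + 2)}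
    (hi : i ∉ Set.range fun k : Fin n => k.succ.succ) : i = 0 ∨ i = 1 := by
  induction i using Fin.cases with
  | zero => exact Or.inl rfl
  | succ i =>
    induction i using Fin.cases with
    | zero => exact Or.inr rfl
    | succ k => exact absurd ⟨k, rfl⟩ hi

theorem stmt_14 {n : ℕ} (A : Matrix (Fin (n + 2)) (Fin (n + 2)) ℝ)
    (hA : ∀ i j, 0 ≤ A i j)
    (htri : ∀ i j : Fin (n + 2), 1 < |(i : ℤ) - (j : ℤ)| → A i j = 0)
    (hsub : ∀ i j : Fin (n + 2), (i : ℕ) = (j : ℕ) + 1 → 0 < A i j)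
    (hsup : ∀ i j : Fin (n + 2), (j : ℕ) = (i : ℕ) + 1 → 0 < A i j)
    (h11 : A 0 0 = 0) :
    nnRank A = 2 + nnRank (A.submatrix (fun i : Fin n => i.succ.succ)
      (fun j : Fin n => j.succ.succ)) := by
  have hedge : ∀ j, j ≠ 1 → A 0 j = 0 ∧ A j 0 = 0 := by
    intro j hj
    rcases eq_or_ne j 0 with rfl | hj₀
    · exact ⟨h11, h11⟩
    have hfar := Fin.one_lt_abs_val_sub_zero hj₀ hj
    exact ⟨htri 0 j (abs_sub_comm (j : ℤ) _ ▸ hfar), htri j 0 hfar⟩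
  set e : Fin n → Fin (n + 2) := fun k => k.succ.succ
  have he : Injective e := (Fin.succ_injective _).comp (Fin.succ_injective _)
  have hone : 1 ∉ Set.range e := fun ⟨k, hk⟩ => Fin.succ_succ_ne_one k hk
  refine le_antisymm ?_ ?_
  · refine (nnRank_le_nnRank_submatrix_add_two hA he he hone hone fun i j hi hj h => ?_).trans_eq
      (add_comm _ _)
    rcases h with h | h
    · obtain rfl := (Fin.eq_zero_or_eq_one_of_notMem_range_succ_succ h).resolve_right hi
      exact (hedge j hj).1
    · obtain rfl := (Fin.eq_zero_or_eq_one_of_notMem_range_succ_succ h).resolve_right hj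
      exact (hedge i hi).2
  · have := nnRank_submatrix_add_two_le hA e e h11 (hsup 0 1 rfl) (hsub 1 0 rfl)
      (fun b => (hedge _ (Fin.succ_succ_ne_one b)).1)
      fun a => (hedge _ (Fin.succ_succ_ne_one a)).2
    omega
end
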